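/- arXiv:1012.2878 — 2 statements merged into one kernel-verified Lean document; each statement's English description precedes it below -/
import Mathlib

section
/- Let G be a cubic bridgeless graph and let Y ⊆ X ⊆ V(G) be such that C = δ(Y) is a 3-edge-cut of G (i.e., |δ(Y)| = 3). Then for every balanced probability distribution 𝐌 on M(G,X) and every M ∈ M(G,X) with Pr[𝐌 = M] > 0, we have |M ∩ C| = 1. -/
open SimpleGraph

/-- `E_X`: the set of edges of `G` with at least one endpoint in `X`. -/
def edgesOn {V : Type*} (G : SimpleGraph V) (X : Set V) : Set (Sym2 V) :=
  {e | e ∈ G.edgeSet ∧ ∃ v ∈ X, v ∈ e}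

/-- `δ(X)`: the set of edges of `G` with exactly one endpoint in `X`. -/
def cutEdges {V : Type*} (G : SimpleGraph V) (X : Set V) : Set (Sym2 V) :=
  {e | e ∈ G.edgeSet ∧ ∃ u v, e = s(u, v) ∧ u ∈ X ∧ v ∉ X}

/-- `M ∈ M(G,X)`: `M` is a subset of `E_X` such that every vertex of `X` is incident
with exactly one edge of `M`. -/
def MatchOn {V : Type*} (G : SimpleGraph V) (X : Set V) (M : Finset (Sym2 V)) : Prop :=
  ↑M ⊆ edgesOn G X ∧ ∀ v ∈ X, ∃! e, e ∈ M ∧ v ∈ e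

/-- `p` is a balanced probability distribution on `M(G,X)`: a nonnegative function,
supported on `M(G,X)`, summing to `1`, such that each edge of `E_X` belongs to the
random element with probability exactly `1/3`. -/
def IsBalanced {V : Type*} [Fintype V] [DecidableEq V] (G : SimpleGraph V) (X : Set V)
    (p : Finset (Sym2 V) → ℝ) : Prop :=
  (∀ M, 0 ≤ p M) ∧ (∀ M, p M ≠ 0 → MatchOn G X M) ∧ (∑ M, p M = 1) ∧
    ∀ e ∈ edgesOn G X, (∑ M, if e ∈ M then p M else 0) = 1 / 3

/-!
Summing, over the vertices of `Y`, the number of edges of a set `F` at each vertex counts every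
edge of `F` inside `Y` twice and every edge of `F ∩ δ(Y)` once, so the sum has the parity of
`|F ∩ δ(Y)|`. For `F = E(G)` in a cubic graph this gives `|Y| ≡ 3|Y| ≡ |δ(Y)| = 3`, so `|Y|` is
odd; for `F = M ∈ M(G,X)` with `Y ⊆ X` the sum is `|Y|`, so every `M` in the support meets
`C = δ(Y)` in an odd, hence positive, number of edges. Balancedness makes the expectation of
`|𝐌 ∩ C|` equal to `3 · 1/3 = 1`, which leaves no room for any `M` in the support to meet `C`
more than once.
-/

open Finset

section

variable {V : Type*} {G : SimpleGraph V}

lemma mk_mem_cutEdges_iff {Y : Set V} {u v : V} :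
    s(u, v) ∈ cutEdges G Y ↔ G.Adj u v ∧ (u ∈ Y ↔ v ∉ Y) := by
  simp only [cutEdges, Set.mem_ofPred_eq, mem_edgeSet, Sym2.eq_iff]
  constructor
  · rintro ⟨h, a, b, (⟨rfl, rfl⟩ | ⟨rfl, rfl⟩), ha, hb⟩ <;> tauto
  · rintro ⟨h, hY⟩
    by_cases hu : u ∈ Y
    · exact ⟨h, u, v, Or.inl ⟨rfl, rfl⟩, hu, hY.1 hu⟩
    · exact ⟨h, v, u, Or.inr ⟨rfl, rfl⟩, by tauto, hu⟩

lemma odd_card_filter_mem_iff_mem_cutEdges [DecidableEq V] {Y : Finset V} {e : Sym2 V}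
    (he : e ∈ G.edgeSet) :
    Odd #{v ∈ Y | v ∈ e} ↔ e ∈ cutEdges G ↑Y := by
  induction e using Sym2.ind with | _ u v => ?_
  have hadj : G.Adj u v := he
  have hfilter : ({w ∈ Y | w ∈ s(u, v)} : Finset V) = {w ∈ ({u, v} : Finset V) | w ∈ Y} := by
    ext; simp [and_comm]
  rw [hfilter, mk_mem_cutEdges_iff]
  by_cases hu : u ∈ Y <;> by_cases hv : v ∈ Y <;>
    simp [filter_insert, filter_singleton, hu, hv, hadj, hadj.ne]

lemma odd_sum_card_incident_iff [DecidableEq V] {F : Finset (Sym2 V)} (hF : ↑F ⊆ G.edgeSet)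
    (Y : Finset V) : Odd (∑ v ∈ Y, #{e ∈ F | v ∈ e}) ↔ Odd (↑F ∩ cutEdges G ↑Y).ncard := by
  have hswap : ∑ v ∈ Y, #{e ∈ F | v ∈ e} = ∑ e ∈ F, #{v ∈ Y | v ∈ e} := by
    simp only [card_filter]
    exact sum_comm
  have hodd : (↑{e ∈ F | Odd #{v ∈ Y | v ∈ e}} : Set (Sym2 V)) = ↑F ∩ cutEdges G ↑Y := by
    ext e
    simp only [coe_filter, Set.mem_ofPred_eq, Set.mem_inter_iff, mem_coe]
    exact and_congr_right fun h => odd_card_filter_mem_iff_mem_cutEdges (hF h)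
  rw [hswap, odd_sum_iff_odd_card_odd, ← hodd, Set.ncard_coe_finset]

lemma odd_sum_degree_iff_odd_ncard_cutEdges [Fintype V] [DecidableEq V] [DecidableRel G.Adj]
    (Y : Finset V) : Odd (∑ v ∈ Y, G.degree v) ↔ Odd (cutEdges G ↑Y).ncard := by
  have hcut : G.edgeSet ∩ cutEdges G ↑Y = cutEdges G ↑Y :=
    Set.inter_eq_right.2 fun e he => he.1
  simpa [← card_incidenceFinset_eq_degree, incidenceFinset_eq_filter, hcut] using
    odd_sum_card_incident_iff (coe_edgeFinset G).subset Y

lemma cutEdges_subset_edgesOn {X Y : Set V} (hYX : Y ⊆ X) : cutEdges G Y ⊆ edgesOn G X := by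
  rintro _ ⟨he, u, v, rfl, hu, -⟩
  exact ⟨he, u, hYX hu, Sym2.mem_mk_left u v⟩

lemma MatchOn.odd_ncard_inter_cutEdges_iff [DecidableEq V] {X : Set V} {M : Finset (Sym2 V)}
    (hM : MatchOn G X M) {Y : Finset V} (hYX : ↑Y ⊆ X) :
    Odd (↑M ∩ cutEdges G ↑Y).ncard ↔ Odd #Y := by
  have hone : ∀ v ∈ Y, #{e ∈ M | v ∈ e} = 1 := by
    intro v hv
    obtain ⟨e, he, huniq⟩ := hM.2 v (hYX hv)
    exact card_eq_one.2 ⟨e, by ext f; simpa using ⟨fun h => huniq f h, fun h => h ▸ he⟩⟩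
  rw [← odd_sum_card_incident_iff (fun e he => (hM.1 he).1) Y, sum_congr rfl hone, sum_const,
    smul_eq_mul, mul_one]

lemma IsBalanced.sum_mul_ncard_inter [Fintype V] [DecidableEq V] {X : Set V}
    {p : Finset (Sym2 V) → ℝ} (hp : IsBalanced G X p) {C : Set (Sym2 V)} (hC : C ⊆ edgesOn G X) :
    ∑ M, p M * (↑M ∩ C).ncard = C.ncard / 3 := by
  classical
  have hcount : ∀ M : Finset (Sym2 V),
      ((↑M ∩ C).ncard : ℝ) = ∑ e ∈ C.toFinset, if e ∈ M then 1 else 0 := by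
    intro M
    rw [sum_boole, ← Set.ncard_coe_finset]
    congr 2
    ext e
    simp [and_comm]
  calc ∑ M, p M * (↑M ∩ C).ncard = ∑ e ∈ C.toFinset, ∑ M, if e ∈ M then p M else 0 := by
        simp_rw [hcount, mul_sum, mul_ite, mul_one, mul_zero]
        exact sum_comm
    _ = ∑ e ∈ C.toFinset, 1 / 3 :=
        sum_congr rfl fun e he => hp.2.2.2 e (hC (Set.mem_toFinset.1 he))
    _ = C.ncard / 3 := by
        rw [sum_const, nsmul_eq_mul, Set.ncard_eq_toFinset_card']
        ring

lemma eq_of_sum_mul_eq_mul_sum {ι K : Type*} [Field K] [LinearOrder K] [IsStrictOrderedRing K]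
    {s : Finset ι} {w f : ι → K} {c : K} (hw : ∀ i ∈ s, 0 ≤ w i)
    (hf : ∀ i ∈ s, w i ≠ 0 → c ≤ f i) (hsum : ∑ i ∈ s, w i * f i = c * ∑ i ∈ s, w i)
    {i : ι} (hi : i ∈ s) (hwi : w i ≠ 0) : f i = c := by
  have hterm : ∀ j ∈ s, 0 ≤ w j * (f j - c) := by
    intro j hj
    rcases eq_or_ne (w j) 0 with h | h
    · simp [h]
    · exact mul_nonneg (hw j hj) (sub_nonneg.2 (hf j hj h))
  have hzero : ∑ j ∈ s, w j * (f j - c) = 0 := by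
    simp only [mul_sub, sum_sub_distrib, hsum, ← sum_mul]
    ring
  have := (sum_eq_zero_iff_of_nonneg hterm).1 hzero i hi
  linarith [(mul_eq_zero.1 this).resolve_left hwi]

end

theorem statement5_general {V : Type*} [Fintype V] [DecidableEq V]
    (G : SimpleGraph V) [DecidableRel G.Adj]
    (hcubic : ∀ v : V, G.degree v = 3)
    (X Y : Set V) (hYX : Y ⊆ X)
    (hcut : (cutEdges G Y).ncard = 3)
    (p : Finset (Sym2 V) → ℝ) (hp : IsBalanced G X p)
    (M : Finset (Sym2 V)) (hM : 0 < p M) :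
    (↑M ∩ cutEdges G Y).ncard = 1 := by
  classical
  have hYodd : Odd #Y.toFinset := by
    have h := odd_sum_degree_iff_odd_ncard_cutEdges (G := G) Y.toFinset
    rw [Set.coe_toFinset, hcut, sum_congr rfl fun v _ => hcubic v, sum_const, smul_eq_mul] at h
    exact (Nat.odd_mul.1 (h.2 (by decide))).1
  have hsupp : ∀ M' ∈ univ, p M' ≠ 0 → (1 : ℝ) ≤ (↑M' ∩ cutEdges G Y).ncard := by
    intro M' _ hM'
    have h := (hp.2.1 M' hM').odd_ncard_inter_cutEdges_iff (Y := Y.toFinset) (by simpa using hYX)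
    rw [Set.coe_toFinset] at h
    exact_mod_cast (h.2 hYodd).pos
  have hmean : ∑ M', p M' * (↑M' ∩ cutEdges G Y).ncard = 1 * ∑ M', p M' := by
    rw [hp.2.2.1, hp.sum_mul_ncard_inter (cutEdges_subset_edgesOn hYX), hcut]
    norm_num
  exact_mod_cast eq_of_sum_mul_eq_mul_sum (fun M' _ => hp.1 M') hsupp hmean (mem_univ M) hM.ne'

theorem statement5 {V : Type*} [Fintype V] [DecidableEq V]
    (G : SimpleGraph V) [DecidableRel G.Adj]
    (hcubic : ∀ v : V, G.degree v = 3)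
    (hconn : G.Connected)
    (hbridgeless : ∀ e ∈ G.edgeSet, ¬ G.IsBridge e)
    (X Y : Set V) (hYX : Y ⊆ X)
    (hcut : (cutEdges G Y).ncard = 3)
    (p : Finset (Sym2 V) → ℝ) (hp : IsBalanced G X p)
    (M : Finset (Sym2 V)) (hM : 0 < p M) :
    (↑M ∩ cutEdges G Y).ncard = 1 :=
  statement5_general G hcubic X Y hYX hcut p hp M hM
end

section
/- Let G be a cyclically 4-edge-connected cubic graph with |V(G)| ≥ 6, and let v1 v2 v3 v4 be a path in G (four distinct vertices with v1v2, v2v3, v3v4 edges of G). Let v1' be the neighbor of v2 other than v1 and v3, and let v4' be the neighbor of v3 other than v2 and v4. Suppose additionally that v1 is not adjacent to v4 and v1' is not adjacent to v4' in G. Let G' be the graph obtained from G by splitting along the path v1 v2 v3 v4: the vertex set of G' is V(G) \ {v2, v3}, and its edges are all edges of G not incident with v2 or v3, together with the two new edges v1v4 and v1'v4'. Then every perfect matching M' of G' avoiding the edge v1v4 has a canonical extension in G, i.e., there exists a perfect matching M of G such that M △ M' ⊆ E(G) △ E(G') (M and M' agree on all edges common to G and G'). -/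
/-!
The edges of `M'` that lie in `G` form a matching of `G`. If they are all of `M'`, adding
`v2v3` makes it perfect. Otherwise, as `M'` avoids `v1v4`, the only edge of `M'` outside `G`
is `v1'v4'`, and the two edges `v2v1'`, `v3v4'` cover exactly the four uncovered vertices.
-/

open SimpleGraph

/-- `G` is cyclically 4-edge-connected: it has no cyclic edge-cut of size less than 4,
where an edge-cut `δ(X)` is cyclic if both the subgraph induced on `X` and the subgraph
induced on its complement contain a cycle. -/
def CyclicallyFourEdgeConnected {V : Type*} (G : SimpleGraph V) : Prop :=
  ∀ X : Set V, ¬ (G.induce X).IsAcyclic → ¬ (G.induce Xᶜ).IsAcyclic →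
    4 ≤ (cutEdges G X).ncard

namespace SimpleGraph.Subgraph

variable {V : Type*} {G : SimpleGraph V}

theorem IsMatching.isPerfectMatching_sup {M N : G.Subgraph} (hM : M.IsMatching)
    (hN : N.IsMatching) (h : IsCompl M.verts N.verts) : (M ⊔ N).IsPerfectMatching := by
  rw [← hM.support_eq_verts, ← hN.support_eq_verts] at h
  refine ⟨hM.sup hN h.disjoint, ?_⟩
  rw [isSpanning_iff, verts_sup, ← hM.support_eq_verts, ← hN.support_eq_verts]
  exact h.sup_eq_top

section

variable {p : V → Prop} {G' : SimpleGraph (Subtype p)} {M' : G'.Subgraph}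

def commonEdges (M' : G'.Subgraph) (G : SimpleGraph V) : G.Subgraph where
  verts := {a | ∃ b, ∃ (ha : p a) (hb : p b), M'.Adj ⟨a, ha⟩ ⟨b, hb⟩ ∧ G.Adj a b}
  Adj a b := ∃ (ha : p a) (hb : p b), M'.Adj ⟨a, ha⟩ ⟨b, hb⟩ ∧ G.Adj a b
  adj_sub := fun ⟨_, _, _, h⟩ => h
  edge_vert h := ⟨_, h⟩
  symm := ⟨fun _ _ ⟨ha, hb, h, h'⟩ => ⟨hb, ha, h.symm, h'.symm⟩⟩

theorem commonEdges_adj {a b : Subtype p} :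
    (M'.commonEdges G).Adj a b ↔ M'.Adj a b ∧ G.Adj a b :=
  ⟨fun ⟨_, _, h, h'⟩ => ⟨h, h'⟩, fun ⟨h, h'⟩ => ⟨a.2, b.2, h, h'⟩⟩

theorem IsMatching.commonEdges (hM' : M'.IsMatching) : (M'.commonEdges G).IsMatching := by
  rintro v ⟨w, hv, hw, hvw, hG⟩
  exact ⟨w, ⟨hv, hw, hvw, hG⟩,
    fun _ ⟨_, _, hvu, _⟩ => congrArg Subtype.val (hM'.eq_of_adj_left hvu hvw)⟩

theorem IsPerfectMatching.mem_commonEdges_verts (hM' : M'.IsPerfectMatching) {v : V} :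
    v ∈ (M'.commonEdges G).verts ↔ ∃ hv : p v, ∀ w, M'.Adj ⟨v, hv⟩ w → G.Adj v w := by
  constructor
  · rintro ⟨w, hv, hw, hvw, hG⟩
    exact ⟨hv, fun u hu => hM'.1.eq_of_adj_left hvw hu ▸ hG⟩
  · rintro ⟨hv, h⟩
    obtain ⟨w, hw, -⟩ := hM'.1 (hM'.2 ⟨v, hv⟩)
    exact ⟨w, hv, w.2, hw, h w hw⟩

theorem IsMatching.exists_isPerfectMatching_of_compl_commonEdges (hM' : M'.IsMatching)
    {Q : G.Subgraph} (hQ : Q.IsMatching) (hcompl : Q.verts = (M'.commonEdges G).vertsᶜ)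
    (hQp : ∀ a b : Subtype p, ¬ Q.Adj a b) :
    ∃ M : G.Subgraph, M.IsPerfectMatching ∧
      ∀ a b : Subtype p, G.Adj a b → (M.Adj a b ↔ M'.Adj a b) := by
  refine ⟨_, hM'.commonEdges.isPerfectMatching_sup hQ (hcompl ▸ isCompl_compl),
    fun a b hab => ?_⟩
  rw [sup_adj, commonEdges_adj]
  simp [hQp, hab]

end

section

variable {u w : V} {G' : SimpleGraph {v // v ≠ u ∧ v ≠ w}} {M' : G'.Subgraph}

theorem IsPerfectMatching.exists_isPerfectMatching_of_forall_adj (hM' : M'.IsPerfectMatching)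
    (huw : G.Adj u w) (hall : ∀ a b, M'.Adj a b → G.Adj a b) :
    ∃ M : G.Subgraph, M.IsPerfectMatching ∧
      ∀ a b : {v // v ≠ u ∧ v ≠ w}, G.Adj a b → (M.Adj a b ↔ M'.Adj a b) := by
  have hverts : (M'.commonEdges G).verts = {v | v ≠ u ∧ v ≠ w} := by
    ext v
    exact ⟨fun h => (hM'.mem_commonEdges_verts.1 h).1,
      fun hv => hM'.mem_commonEdges_verts.2 ⟨hv, hall _⟩⟩
  refine hM'.1.exists_isPerfectMatching_of_compl_commonEdges (.subgraphOfAdj huw) ?_ ?_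
  · ext v
    simp only [subgraphOfAdj_verts, Set.mem_insert_iff, Set.mem_singleton_iff, hverts,
      Set.mem_compl_iff, Set.mem_ofPred_eq]
    tauto
  · rintro ⟨a, ha⟩ ⟨b, hb⟩ h
    simp only [subgraphOfAdj_adj, Sym2.eq_iff] at h
    tauto

theorem IsPerfectMatching.exists_isPerfectMatching_of_not_adj (hM' : M'.IsPerfectMatching)
    (huw : u ≠ w) {x y : {v // v ≠ u ∧ v ≠ w}} (hux : G.Adj u x) (hwy : G.Adj w y)
    (hxy : M'.Adj x y) (hGxy : ¬ G.Adj x y)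
    (hother : ∀ a b, M'.Adj a b → ¬ G.Adj a b → a = x ∨ a = y) :
    ∃ M : G.Subgraph, M.IsPerfectMatching ∧
      ∀ a b : {v // v ≠ u ∧ v ≠ w}, G.Adj a b → (M.Adj a b ↔ M'.Adj a b) := by
  have hverts : (M'.commonEdges G).verts = {v | (v ≠ u ∧ v ≠ w) ∧ v ≠ x ∧ v ≠ y} := by
    ext v
    rw [hM'.mem_commonEdges_verts]
    constructor
    · rintro ⟨hv, h⟩
      refine ⟨hv, ?_, ?_⟩ <;> rintro rfl
      · exact hGxy (h _ hxy)
      · exact hGxy (h _ hxy.symm).symm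
    · rintro ⟨hv, hx, hy⟩
      refine ⟨hv, fun z hz => by_contra fun hG => ?_⟩
      rcases hother _ _ hz hG with rfl | rfl
      exacts [hx rfl, hy rfl]
  have hxy_ne : (x : V) ≠ y := fun h => (M'.adj_sub hxy).ne (Subtype.ext h)
  refine hM'.1.exists_isPerfectMatching_of_compl_commonEdges
    ((IsMatching.subgraphOfAdj hux).sup (.subgraphOfAdj hwy) ?_) ?_ ?_
  · rw [support_subgraphOfAdj, support_subgraphOfAdj]
    simp [huw.symm, x.2.2.symm, y.2.1, hxy_ne.symm]
  · ext v
    simp only [verts_sup, subgraphOfAdj_verts, Set.mem_union, Set.mem_insert_iff,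
      Set.mem_singleton_iff, hverts, Set.mem_compl_iff, Set.mem_ofPred_eq]
    tauto
  · rintro ⟨a, ha⟩ ⟨b, hb⟩ h
    simp only [sup_adj, subgraphOfAdj_adj, Sym2.eq_iff] at h
    tauto

end

end SimpleGraph.Subgraph

theorem statement13_general {V : Type*}
    (G : SimpleGraph V)
    (v1 v2 v3 v4 v1' v4' : V)
    -- v1 v2 v3 v4 is a path in G (four distinct vertices)
    (h12 : G.Adj v1 v2) (h23 : G.Adj v2 v3) (h34 : G.Adj v3 v4)
    (hne13 : v1 ≠ v3) (hne24 : v2 ≠ v4)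
    -- v1' is the neighbor of v2 other than v1 and v3
    (h2v1' : G.Adj v2 v1') (hv1'3 : v1' ≠ v3)
    -- v4' is the neighbor of v3 other than v2 and v4
    (h3v4' : G.Adj v3 v4') (hv4'2 : v4' ≠ v2)
    -- G' is the graph obtained from G by splitting along the path v1 v2 v3 v4
    (G' : SimpleGraph {v : V // v ≠ v2 ∧ v ≠ v3})
    (hG' : ∀ a b : {v : V // v ≠ v2 ∧ v ≠ v3},
      G'.Adj a b ↔ (G.Adj ↑a ↑b ∨ ((↑a : V) = v1 ∧ (↑b : V) = v4) ∨
        ((↑a : V) = v4 ∧ (↑b : V) = v1) ∨ ((↑a : V) = v1' ∧ (↑b : V) = v4') ∨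
        ((↑a : V) = v4' ∧ (↑b : V) = v1')))
    -- M' is a perfect matching of G' avoiding the new edge v1v4
    (M' : G'.Subgraph) (hM' : M'.IsPerfectMatching)
    (havoid : ¬ M'.Adj ⟨v1, h12.ne, hne13⟩ ⟨v4, hne24.symm, h34.ne'⟩) :
    -- M' has a canonical extension: a perfect matching M of G agreeing with M'
    -- on all edges common to G and G'
    ∃ M : G.Subgraph, M.IsPerfectMatching ∧
      ∀ a b : {v : V // v ≠ v2 ∧ v ≠ v3}, G.Adj ↑a ↑b → G'.Adj a b →
        (M.Adj ↑a ↑b ↔ M'.Adj a b) := by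
  set x : {v : V // v ≠ v2 ∧ v ≠ v3} := ⟨v1', h2v1'.ne', hv1'3⟩
  set y : {v : V // v ≠ v2 ∧ v ≠ v3} := ⟨v4', hv4'2, h3v4'.ne'⟩
  have hnew_edge :
      ∀ a b, M'.Adj a b → ¬ G.Adj a b → a = x ∧ b = y ∨ a = y ∧ b = x := by
    rintro ⟨a, ha⟩ ⟨b, hb⟩ hab hG
    rcases (hG' _ _).1 (M'.adj_sub hab) with
      h | ⟨rfl, rfl⟩ | ⟨rfl, rfl⟩ | ⟨rfl, rfl⟩ | ⟨rfl, rfl⟩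
    · exact absurd h hG
    · exact absurd hab havoid
    · exact absurd hab.symm havoid
    · exact .inl ⟨rfl, rfl⟩
    · exact .inr ⟨rfl, rfl⟩
  suffices ∃ M : G.Subgraph, M.IsPerfectMatching ∧
      ∀ a b : {v : V // v ≠ v2 ∧ v ≠ v3}, G.Adj a b → (M.Adj a b ↔ M'.Adj a b) from
    this.imp fun M hM => ⟨hM.1, fun a b hab _ => hM.2 a b hab⟩
  by_cases hall : ∀ a b, M'.Adj a b → G.Adj a b
  · exact hM'.exists_isPerfectMatching_of_forall_adj h23 hall
  · push Not at hall
    obtain ⟨a, b, hab, hGab⟩ := hall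
    obtain ⟨hxy, hGxy⟩ : M'.Adj x y ∧ ¬ G.Adj x y := by
      rcases hnew_edge a b hab hGab with ⟨rfl, rfl⟩ | ⟨rfl, rfl⟩
      exacts [⟨hab, hGab⟩, ⟨hab.symm, fun h => hGab h.symm⟩]
    exact hM'.exists_isPerfectMatching_of_not_adj h23.ne h2v1' h3v4' hxy hGxy
      fun a b hab hG => (hnew_edge a b hab hG).imp And.left And.left

theorem statement13 {V : Type*} [Fintype V] [DecidableEq V]
    (G : SimpleGraph V) [DecidableRel G.Adj]
    (hcubic : ∀ v : V, G.degree v = 3)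
    (hcyc : CyclicallyFourEdgeConnected G)
    (hcard : 6 ≤ Fintype.card V)
    (v1 v2 v3 v4 v1' v4' : V)
    -- v1 v2 v3 v4 is a path in G (four distinct vertices)
    (h12 : G.Adj v1 v2) (h23 : G.Adj v2 v3) (h34 : G.Adj v3 v4)
    (hne13 : v1 ≠ v3) (hne14 : v1 ≠ v4) (hne24 : v2 ≠ v4)
    -- v1' is the neighbor of v2 other than v1 and v3
    (h2v1' : G.Adj v2 v1') (hv1'1 : v1' ≠ v1) (hv1'3 : v1' ≠ v3)
    -- v4' is the neighbor of v3 other than v2 and v4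
    (h3v4' : G.Adj v3 v4') (hv4'2 : v4' ≠ v2) (hv4'4 : v4' ≠ v4)
    -- extra assumptions
    (hnadj14 : ¬ G.Adj v1 v4) (hnadj1'4' : ¬ G.Adj v1' v4')
    -- v1, v4, v1', v4' are four distinct vertices
    (hne1'4' : v1' ≠ v4') (hne11' : v1 ≠ v1') (hne14' : v1 ≠ v4')
    (hne44' : v4 ≠ v4') (hne41' : v4 ≠ v1')
    -- G' is the graph obtained from G by splitting along the path v1 v2 v3 v4
    (G' : SimpleGraph {v : V // v ≠ v2 ∧ v ≠ v3}) [DecidableRel G'.Adj]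
    (hG' : ∀ a b : {v : V // v ≠ v2 ∧ v ≠ v3},
      G'.Adj a b ↔ (G.Adj ↑a ↑b ∨ ((↑a : V) = v1 ∧ (↑b : V) = v4) ∨
        ((↑a : V) = v4 ∧ (↑b : V) = v1) ∨ ((↑a : V) = v1' ∧ (↑b : V) = v4') ∨
        ((↑a : V) = v4' ∧ (↑b : V) = v1')))
    -- M' is a perfect matching of G' avoiding the new edge v1v4
    (M' : G'.Subgraph) (hM' : M'.IsPerfectMatching)
    (havoid : ¬ M'.Adj ⟨v1, h12.ne, hne13⟩ ⟨v4, hne24.symm, h34.ne'⟩) :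
    -- M' has a canonical extension: a perfect matching M of G agreeing with M'
    -- on all edges common to G and G'
    ∃ M : G.Subgraph, M.IsPerfectMatching ∧
      ∀ a b : {v : V // v ≠ v2 ∧ v ≠ v3}, G.Adj ↑a ↑b → G'.Adj a b →
        (M.Adj ↑a ↑b ↔ M'.Adj a b) :=
  statement13_general G v1 v2 v3 v4 v1' v4' h12 h23 h34 hne13 hne24 h2v1' hv1'3 h3v4' hv4'2 G' hG'
    M' hM' havoid
end
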